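/- Let F be a field of characteristic 2. There is a well-defined group homomorphism I(F) → K^W_1(F) sending the class of the Pfister form ⟨⟨a⟩⟩ := 1 + ⟨-a⟩ to ⟦a⟧, and this homomorphism is an isomorphism I(F) ≅ K^W_1(F). -/

import Mathlib

noncomputable section

/-- Generators of the Milnor–Witt K-theory ring: a symbol `[u]` for each unit `u`
and the element `η`. -/
inductive MWGen (F : Type) [Field F] : Type
  | of : Fˣ → MWGen F
  | eta : MWGen F

/-- The defining relations KMW1–KMW4 of Milnor–Witt K-theory, imposed on the free
(noncommutative) ℤ-algebra on the generators. -/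
inductive MWRel (F : Type) [Field F] :
    FreeAlgebra ℤ (MWGen F) → FreeAlgebra ℤ (MWGen F) → Prop
  | steinberg (a : Fˣ) (h1 : (a : F) ≠ 1) :
      MWRel F
        (FreeAlgebra.ι ℤ (MWGen.of a) *
          FreeAlgebra.ι ℤ (MWGen.of (Units.mk0 (1 - (a : F)) (sub_ne_zero_of_ne h1.symm))))
        0
  | mul_rel (a b : Fˣ) :
      MWRel F (FreeAlgebra.ι ℤ (MWGen.of (a * b)))
        (FreeAlgebra.ι ℤ (MWGen.of a) + FreeAlgebra.ι ℤ (MWGen.of b) +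
          FreeAlgebra.ι ℤ MWGen.eta * FreeAlgebra.ι ℤ (MWGen.of a) *
            FreeAlgebra.ι ℤ (MWGen.of b))
  | comm_rel (u : Fˣ) :
      MWRel F (FreeAlgebra.ι ℤ MWGen.eta * FreeAlgebra.ι ℤ (MWGen.of u))
        (FreeAlgebra.ι ℤ (MWGen.of u) * FreeAlgebra.ι ℤ MWGen.eta)
  | hyp :
      MWRel F
        (FreeAlgebra.ι ℤ MWGen.eta *
          (FreeAlgebra.ι ℤ MWGen.eta * FreeAlgebra.ι ℤ (MWGen.of (-1)) + 2))
        0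

/-- The Milnor–Witt K-theory ring `K^MW_*(F)` (all degrees together). -/
def KMW (F : Type) [Field F] : Type := RingQuot (MWRel F)

instance (F : Type) [Field F] : Ring (KMW F) := inferInstanceAs (Ring (RingQuot (MWRel F)))

/-- The symbol `[u] ∈ K^MW_1(F)`. -/
def mw {F : Type} [Field F] (u : Fˣ) : KMW F :=
  RingQuot.mkRingHom (MWRel F) (FreeAlgebra.ι ℤ (MWGen.of u))

/-- The element `η ∈ K^MW_{-1}(F)`. -/
def mweta (F : Type) [Field F] : KMW F :=
  RingQuot.mkRingHom (MWRel F) (FreeAlgebra.ι ℤ MWGen.eta)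

/-- The degree-`n` homogeneous component of `K^MW_*(F)`: the additive subgroup spanned
by the monomials `η^m [u₁]⋯[u_r]` with `r - m = n`. -/
def KMWcomp (F : Type) [Field F] (n : ℤ) : AddSubgroup (KMW F) :=
  AddSubgroup.closure {x | ∃ (m r : ℕ) (v : Fin r → Fˣ),
    (r : ℤ) - (m : ℤ) = n ∧ x = (mweta F) ^ m * (List.ofFn fun i => mw (v i)).prod}

/-- The hyperbolic element `h = η[-1] + 2 ∈ K^MW_0(F)`. -/
def hKMW (F : Type) [Field F] : KMW F := mweta F * mw (-1) + 2

/-- Witt K-theory `K^W_*(F) := K^MW_*(F)/(h)`. -/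
def KW (F : Type) [Field F] : Type :=
  RingQuot (fun x y : KMW F => x = hKMW F ∧ y = 0)

instance (F : Type) [Field F] : Ring (KW F) :=
  inferInstanceAs (Ring (RingQuot (fun x y : KMW F => x = hKMW F ∧ y = 0)))

/-- The quotient map `K^MW_*(F) → K^W_*(F)`. -/
def kwq (F : Type) [Field F] : KMW F →+* KW F :=
  RingQuot.mkRingHom (fun x y : KMW F => x = hKMW F ∧ y = 0)

/-- The class `⟦a⟧ ∈ K^W_1(F)` of the symbol `[a]`. -/
def kw {F : Type} [Field F] (a : Fˣ) : KW F := kwq F (mw a)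

/-- The degree-`n` homogeneous component of `K^W_*(F)`. -/
def KWcomp (F : Type) [Field F] (n : ℤ) : AddSubgroup (KW F) :=
  AddSubgroup.map (kwq F).toAddMonoidHom (KMWcomp F n)

/-- The defining relations of the Grothendieck–Witt ring `GW(F)`, presented as a
commutative ring with generators `⟨u⟩` for `u ∈ Fˣ`: the additive relations
GW1–GW3 together with multiplicativity of the symbols. -/
inductive GWRel (F : Type) [Field F] :
    MvPolynomial Fˣ ℤ → MvPolynomial Fˣ ℤ → Prop
  | sq (u v : Fˣ) : GWRel F (MvPolynomial.X (u * v ^ 2)) (MvPolynomial.X u)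
  | hyp (u : Fˣ) :
      GWRel F (MvPolynomial.X u + MvPolynomial.X (-u))
        (1 + MvPolynomial.X (-1 : Fˣ))
  | add (u v : Fˣ) (h : (u : F) + (v : F) ≠ 0) :
      GWRel F (MvPolynomial.X u + MvPolynomial.X v)
        (MvPolynomial.X (Units.mk0 ((u : F) + (v : F)) h) +
          MvPolynomial.X (Units.mk0 ((u : F) + (v : F)) h * u * v))
  | mul (u v : Fˣ) :
      GWRel F (MvPolynomial.X u * MvPolynomial.X v) (MvPolynomial.X (u * v))
  | one : GWRel F (MvPolynomial.X (1 : Fˣ)) 1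

/-- The Grothendieck–Witt ring `GW(F)` of the field `F`, via its presentation. -/
def GW (F : Type) [Field F] : Type := RingQuot (GWRel F)

instance (F : Type) [Field F] : CommRing (GW F) :=
  inferInstanceAs (CommRing (RingQuot (GWRel F)))

/-- The generator `⟨u⟩ ∈ GW(F)`. -/
def gw {F : Type} [Field F] (u : Fˣ) : GW F :=
  RingQuot.mkRingHom (GWRel F) (MvPolynomial.X u)

/-- The hyperbolic element `h = 1 + ⟨-1⟩ ∈ GW(F)`. -/
def hGW (F : Type) [Field F] : GW F := 1 + gw (-1 : Fˣ)

/-- The Witt ring `W(F) := GW(F)/(h)`. -/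
def WittRing (F : Type) [Field F] : Type := GW F ⧸ Ideal.span {hGW F}

instance (F : Type) [Field F] : CommRing (WittRing F) :=
  inferInstanceAs (CommRing (GW F ⧸ Ideal.span {hGW F}))

/-- The quotient map `GW(F) → W(F)`. -/
def wq (F : Type) [Field F] : GW F →+* WittRing F :=
  Ideal.Quotient.mk (Ideal.span {hGW F})

/-- The rank-mod-2 ring homomorphism on `GW(F)`, sending every `⟨u⟩` to `1`. -/
def rkGW (F : Type) [Field F] : GW F →+* ZMod 2 :=
  RingQuot.lift
    ⟨MvPolynomial.eval₂Hom (Int.castRingHom (ZMod 2)) (fun _ => (1 : ZMod 2)), by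
      intro x y h
      induction h <;> simp⟩

/-- The rank-mod-2 homomorphism on the Witt ring `W(F)`. -/
def rkW (F : Type) [Field F] : WittRing F →+* ZMod 2 :=
  Ideal.Quotient.lift (Ideal.span {hGW F}) (rkGW F) (by
    intro a ha
    rw [Ideal.mem_span_singleton] at ha
    obtain ⟨c, rfl⟩ := ha
    have h1 : rkGW F (hGW F) = 0 := by
      have h2 : rkGW F (gw (-1 : Fˣ)) = 1 := by
        erw [rkGW, gw, RingQuot.lift_mkRingHom_apply]
        simp
      rw [hGW, map_add, map_one, h2]
      decide
    simp [h1])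

/-- The fundamental ideal `I(F) ⊆ W(F)`: the kernel of rank mod 2. -/
def fundIdeal (F : Type) [Field F] : Ideal (WittRing F) :=
  RingHom.ker (rkW F)

/-- The class of the 1-fold Pfister form `⟨⟨a⟩⟩ = 1 + ⟨-a⟩` in `W(F)`. -/
def pfister {F : Type} [Field F] (a : Fˣ) : WittRing F :=
  1 + wq F (gw (-a))

/-! ### Auxiliary development -/

section Aux

variable {F : Type} [Field F]

/-- The class of η in `K^W`. -/
def et (F : Type) [Field F] : KW F := kwq F (mweta F)

lemma mw_mul (u v : Fˣ) :
    mw (u * v) = mw u + mw v + mweta F * mw u * mw v := by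
  have h := RingQuot.mkRingHom_rel (MWRel.mul_rel (F := F) u v)
  rw [map_add, map_add, map_mul, map_mul] at h
  exact h

lemma kw_mul (u v : Fˣ) :
    kw (u * v) = kw u + kw v + et F * kw u * kw v := by
  have := congrArg (kwq F) (mw_mul u v)
  simpa [kw, et, map_add, map_mul] using this

lemma mw_comm_eta (u : Fˣ) : mweta F * mw u = mw u * mweta F := by
  have h := RingQuot.mkRingHom_rel (MWRel.comm_rel (F := F) u)
  rw [map_mul, map_mul] at h
  exact h

lemma kw_comm_eta (u : Fˣ) : et F * kw u = kw u * et F := by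
  have := congrArg (kwq F) (mw_comm_eta (F := F) u)
  simpa [kw, et, map_mul] using this

lemma mw_steinberg (a : Fˣ) (h1 : (a : F) ≠ 1) :
    mw a * mw (Units.mk0 (1 - (a : F)) (sub_ne_zero_of_ne h1.symm)) = 0 := by
  have h := RingQuot.mkRingHom_rel (MWRel.steinberg (F := F) a h1)
  rw [map_mul, map_zero] at h
  exact h

lemma kw_steinberg (a : Fˣ) (h1 : (a : F) ≠ 1) :
    kw a * kw (Units.mk0 (1 - (a : F)) (sub_ne_zero_of_ne h1.symm)) = 0 := by
  have := congrArg (kwq F) (mw_steinberg (F := F) a h1)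
  simpa [kw, map_mul] using this

lemma kw_hyp : et F * kw (-1 : Fˣ) + 2 = 0 := by
  have h := RingQuot.mkRingHom_rel
    (r := fun x y : KMW F => x = hKMW F ∧ y = 0) ⟨rfl, rfl⟩
  rw [map_zero, hKMW, map_add, map_mul, map_ofNat] at h
  exact h

/-- Steinberg relation, convenient form. -/
lemma kw_steinberg' (u v : Fˣ) (hsum : (u : F) + (v : F) = 1) (hu : u ≠ 1) :
    kw u * kw v = 0 := by
  have hval : (u : F) ≠ 1 := fun h => hu (Units.ext (by simpa using h))
  have hv : v = Units.mk0 (1 - (u : F)) (sub_ne_zero_of_ne hval.symm) := by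
    apply Units.ext
    simp only [Units.val_mk0]
    linear_combination hsum
  rw [hv]
  exact kw_steinberg u hval

end Aux
section CharTwoAux

variable {F : Type} [Field F] [CharP F 2]

lemma units_neg_eq (u : Fˣ) : (-u : Fˣ) = u := by
  apply Units.ext
  simpa using CharTwo.neg_eq (u : F)

lemma kw_eta_one : et F * kw (1 : Fˣ) = -2 := by
  have h := kw_hyp (F := F)
  rw [units_neg_eq] at h
  exact eq_neg_of_add_eq_zero_left h

lemma kw_one : kw (1 : Fˣ) = 0 := by
  have h := kw_mul (F := F) 1 1
  rw [mul_one] at h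
  have h3 : et F * kw (1:Fˣ) * kw (1:Fˣ) = -(kw (1:Fˣ) + kw (1:Fˣ)) := by
    rw [kw_eta_one, neg_mul, two_mul]
  rw [h3] at h
  abel_nf at h
  exact h

lemma kw_two : (2 : KW F) = 0 := by
  have h := kw_eta_one (F := F)
  rw [kw_one, mul_zero] at h
  exact neg_eq_zero.mp h.symm

lemma kw_add_self (x : KW F) : x + x = 0 := by
  have : (2 : KW F) * x = 0 := by rw [kw_two, zero_mul]
  rwa [two_mul] at this

lemma kw_neg (x : KW F) : -x = x :=
  neg_eq_of_add_eq_zero_left (kw_add_self x)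

omit [CharP F 2] in
lemma eta_swap (u : Fˣ) (x : KW F) :
    kw u * (et F * x) = et F * (kw u * x) := by
  rw [← mul_assoc, ← kw_comm_eta, mul_assoc]

/-- `⟨u⟩⟨v⟩ = ⟨uv⟩` where `⟨u⟩ = 1 + η[u]`. -/
lemma kw_gw_mul (u v : Fˣ) :
    (1 + et F * kw u) * (1 + et F * kw v) = 1 + et F * kw (u * v) := by
  rw [kw_mul]
  have h1 : (1 + et F * kw u) * (1 + et F * kw v)
      = 1 + et F * kw u + et F * kw v + et F * kw u * (et F * kw v) := by
    noncomm_ring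
  have h2 : et F * kw u * (et F * kw v) = et F * (et F * kw u * kw v) := by
    rw [mul_assoc (et F) (kw u) (et F * kw v), eta_swap]
    noncomm_ring
  rw [h1, h2, mul_add, mul_add]
  abel

lemma kw_gw_inv (u : Fˣ) : (1 + et F * kw u) * (1 + et F * kw u⁻¹) = 1 := by
  rw [kw_gw_mul, mul_inv_cancel, kw_one, mul_zero, add_zero]

lemma kw_cancel {u : Fˣ} {x : KW F} (h : (1 + et F * kw u) * x = 0) : x = 0 := by
  have h2 := congrArg (fun y => (1 + et F * kw u⁻¹) * y) h
  simp only [mul_zero] at h2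
  rw [← mul_assoc] at h2
  have h3 : (1 + et F * kw u⁻¹) * (1 + et F * kw u) = 1 := by
    have := kw_gw_inv (F := F) u⁻¹
    rwa [inv_inv] at this
  rwa [h3, one_mul] at h2

end CharTwoAux
section CharTwoAux2

variable {F : Type} [Field F] [CharP F 2]

lemma kw_inv_expand (u : Fˣ) :
    kw (u⁻¹ : Fˣ) + kw u + et F * kw u⁻¹ * kw u = 0 := by
  have h := kw_mul (F := F) u⁻¹ u
  rw [inv_mul_cancel, kw_one] at h
  exact h.symm

lemma kw_u_eq_inv (u : Fˣ) :
    kw u = kw u⁻¹ + et F * kw u⁻¹ * kw u := by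
  have h := kw_inv_expand (F := F) u
  have h2 : kw u + (kw (u⁻¹:Fˣ) + et F * kw u⁻¹ * kw u) = 0 := by
    linear_combination (norm := noncomm_ring) h
  have h3 := neg_eq_of_add_eq_zero_left h2
  rw [kw_neg] at h3
  exact h3.symm

lemma kw_T (u : Fˣ) (hu : u ≠ 1) (w : Fˣ) (hw : (w : F) = 1 - (u : F)⁻¹) :
    kw u * kw w = 0 := by
  have hu1 : (u : F) ≠ 1 := fun h => hu (Units.ext (by simpa using h))
  have huinv : u⁻¹ ≠ 1 := fun h => hu (by simpa using congrArg (·⁻¹) h)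
  have hst : kw u⁻¹ * kw w = 0 := by
    apply kw_steinberg' u⁻¹ w _ huinv
    rw [hw, Units.val_inv_eq_inv_val]
    ring
  have heq : kw u * kw w = et F * kw u⁻¹ * (kw u * kw w) := by
    calc kw u * kw w = (kw u⁻¹ + et F * kw u⁻¹ * kw u) * kw w := by rw [← kw_u_eq_inv]
    _ = kw u⁻¹ * kw w + et F * kw u⁻¹ * (kw u * kw w) := by rw [add_mul, mul_assoc]
    _ = et F * kw u⁻¹ * (kw u * kw w) := by rw [hst, zero_add]
  have hz : (1 + et F * kw u⁻¹) * (kw u * kw w) = 0 := by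
    rw [add_mul, one_mul, ← heq, kw_add_self]
  exact kw_cancel hz

lemma kw_sq (u : Fˣ) : kw u * kw u = 0 := by
  by_cases hu : u = 1
  · rw [hu, kw_one, mul_zero]
  · have hu1 : (u : F) ≠ 1 := fun h => hu (Units.ext (by simpa using h))
    have hainv : (1 : F) - (u : F) ≠ 0 := sub_ne_zero_of_ne hu1.symm
    have hbinv : (1 : F) - (u : F)⁻¹ ≠ 0 := by
      rw [sub_ne_zero]
      intro h
      exact hu1 (by rw [← inv_inv (u:F), ← h, inv_one])
    set a : Fˣ := Units.mk0 (1 - (u : F)) hainv with ha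
    set b : Fˣ := Units.mk0 (1 - (u : F)⁻¹) hbinv with hb
    have hfact : u = a * b⁻¹ := by
      apply Units.ext
      rw [Units.val_mul, Units.val_inv_eq_inv_val]
      rw [ha, hb]
      simp only [Units.val_mk0]
      rw [eq_comm, mul_inv_eq_iff_eq_mul₀ hbinv]
      have h5 : (u : F) * (1 - (u:F)⁻¹) = (u : F) - 1 := by
        field_simp
      rw [h5, CharTwo.sub_eq_add, CharTwo.sub_eq_add, add_comm]
    have hS : kw u * kw a = 0 := by
      apply kw_steinberg' u a _ hu
      rw [ha]; simp only [Units.val_mk0]; ring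
    have hT : kw u * kw b = 0 := kw_T u hu b (by rw [hb, Units.val_mk0])
    have hinv : kw (b⁻¹ : Fˣ) = kw b + et F * kw b * kw b⁻¹ := by
      have h6 := kw_u_eq_inv (F := F) b⁻¹
      rwa [inv_inv] at h6
    have hbi : kw u * kw b⁻¹ = 0 := by
      calc kw u * kw b⁻¹ = kw u * (kw b + et F * kw b * kw b⁻¹) := by rw [← hinv]
      _ = kw u * kw b + kw u * (et F * (kw b * kw b⁻¹)) := by
            rw [mul_add, mul_assoc (et F)]
      _ = kw u * kw b + et F * (kw u * (kw b * kw b⁻¹)) := by rw [eta_swap]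
      _ = 0 := by
            rw [hT, zero_add, ← mul_assoc (kw u) (kw b), hT, zero_mul, mul_zero]
    have hexp : kw u = kw a + kw b⁻¹ + et F * kw a * kw b⁻¹ := by
      rw [← kw_mul, ← hfact]
    calc kw u * kw u = kw u * (kw a + kw b⁻¹ + et F * kw a * kw b⁻¹) := by rw [← hexp]
    _ = kw u * kw a + kw u * kw b⁻¹ + kw u * (et F * (kw a * kw b⁻¹)) := by
          rw [mul_add, mul_add, mul_assoc (et F)]
    _ = et F * (kw u * (kw a * kw b⁻¹)) := by rw [hS, hbi, zero_add, zero_add, eta_swap]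
    _ = 0 := by rw [← mul_assoc (kw u) (kw a), hS, zero_mul, mul_zero]

omit [CharP F 2] in
lemma kw_eta_swap2 (u v : Fˣ) :
    et F * (kw u * kw v) = et F * (kw v * kw u) := by
  have h1 := kw_mul (F := F) u v
  have h2 := kw_mul (F := F) v u
  rw [mul_comm v u] at h2
  have h3 : et F * kw u * kw v = et F * kw v * kw u := by
    have h4 := h1.symm.trans h2
    linear_combination (norm := noncomm_ring) h4
  rw [← mul_assoc, ← mul_assoc, h3]

lemma kw_comm_aux (A B E : KW F) (t1 : A * A = 0) (t4 : B * B = 0)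
    (hP : (A + B + E * A * B) * (A + B + E * A * B) = 0)
    (swapA : ∀ x : KW F, A * (E * x) = E * (A * x))
    (swapB : ∀ x : KW F, B * (E * x) = E * (B * x))
    (hEBA : E * (B * A) = E * (A * B)) : A * B = B * A := by
  have expand : (A + B + E * A * B) * (A + B + E * A * B)
      = A * A + (A * B + B * A) + B * B
        + A * (E * (A * B)) + B * (E * (A * B))
        + (E * (A * B)) * A + (E * (A * B)) * B
        + (E * (A * B)) * (E * (A * B)) := by noncomm_ring
  have t5 : A * (E * (A * B)) = 0 := by
    rw [swapA, ← mul_assoc A A B, t1, zero_mul, mul_zero]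
  have t6 : B * (E * (A * B)) = 0 := by
    rw [swapB, ← mul_assoc B A B, ← mul_assoc E (B*A) B, hEBA,
      mul_assoc E (A*B) B, mul_assoc A B B, t4, mul_zero, mul_zero]
  have t7 : (E * (A * B)) * A = 0 := by
    rw [← hEBA, mul_assoc E (B*A) A, mul_assoc B A A, t1, mul_zero, mul_zero]
  have t8 : (E * (A * B)) * B = 0 := by
    rw [mul_assoc E (A*B) B, mul_assoc A B B, t4, mul_zero, mul_zero]
  have t9 : (E * (A * B)) * (E * (A * B)) = 0 := by
    rw [mul_assoc E (A*B) (E*(A*B)), mul_assoc A B (E*(A*B)), t6, mul_zero, mul_zero]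
  rw [expand, t1, t5, t6, t7, t8, t9, t4] at hP
  simp only [add_zero, zero_add] at hP
  have h := neg_eq_of_add_eq_zero_left hP
  rw [kw_neg] at h
  exact h.symm

lemma kw_symb_comm (u v : Fˣ) : kw u * kw v = kw v * kw u := by
  have hP : kw (u * v) * kw (u * v) = 0 := kw_sq (u * v)
  rw [kw_mul] at hP
  exact kw_comm_aux (kw u) (kw v) (et F) (kw_sq u) (kw_sq v) hP
    (eta_swap u) (eta_swap v) (kw_eta_swap2 v u)

end CharTwoAux2
section KWComm

variable {F : Type} [Field F] [CharP F 2]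

/-- The canonical surjection from the free algebra onto `K^W`. -/
def kwpi (F : Type) [Field F] : FreeAlgebra ℤ (MWGen F) →+* KW F :=
  (kwq F).comp (RingQuot.mkRingHom (MWRel F))

omit [CharP F 2] in
lemma kwpi_surjective : Function.Surjective (kwpi F) :=
  (RingQuot.mkRingHom_surjective _).comp (RingQuot.mkRingHom_surjective _)

omit [CharP F 2] in
lemma kwpi_of (u : Fˣ) : kwpi F (FreeAlgebra.ι ℤ (MWGen.of u)) = kw u := rfl

omit [CharP F 2] in
lemma kwpi_eta : kwpi F (FreeAlgebra.ι ℤ MWGen.eta) = et F := rfl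

omit [CharP F 2] in
lemma kwpi_int (r : ℤ) :
    kwpi F (algebraMap ℤ (FreeAlgebra ℤ (MWGen F)) r) = (r : KW F) := by
  rw [eq_intCast (algebraMap ℤ (FreeAlgebra ℤ (MWGen F))) r]
  simp [map_intCast]

lemma kw_gen_comm (g h : MWGen F) :
    Commute (kwpi F (FreeAlgebra.ι ℤ g)) (kwpi F (FreeAlgebra.ι ℤ h)) := by
  cases g with
  | of u =>
      cases h with
      | of v => exact kw_symb_comm u v
      | eta => exact (kw_comm_eta u).symm
  | eta =>
      cases h with
      | of v => exact kw_comm_eta v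
      | eta => rfl

lemma kw_gen_comm_all (g : MWGen F) (y : FreeAlgebra ℤ (MWGen F)) :
    Commute (kwpi F (FreeAlgebra.ι ℤ g)) (kwpi F y) := by
  induction y using FreeAlgebra.induction with
  | grade0 r => rw [kwpi_int]; exact Int.commute_cast _ _
  | grade1 x => exact kw_gen_comm g x
  | mul a b ha hb => rw [map_mul]; exact ha.mul_right hb
  | add a b ha hb => rw [map_add]; exact ha.add_right hb

lemma kw_mul_comm (x y : KW F) : x * y = y * x := by
  obtain ⟨a, rfl⟩ := kwpi_surjective (F := F) x
  obtain ⟨b, rfl⟩ := kwpi_surjective (F := F) y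
  induction a using FreeAlgebra.induction with
  | grade0 r => rw [kwpi_int]; exact Int.cast_commute _ _
  | grade1 g => exact kw_gen_comm_all g b
  | mul s t hs ht => rw [map_mul]; exact Commute.mul_left hs ht
  | add s t hs ht => rw [map_add]; exact Commute.add_left hs ht

/-- `K^W(F)` is commutative when `char F = 2`. -/
@[reducible] def kwCommRing (F : Type) [Field F] [CharP F 2] : CommRing (KW F) :=
  { instRingKW F with mul_comm := kw_mul_comm }

end KWComm
attribute [local instance] kwCommRing

section KWAddRel

variable {F : Type} [Field F] [CharP F 2]

lemma kw_mul_inv_self (w : Fˣ) : kw w * kw (w⁻¹ : Fˣ) = 0 := by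
  have h0 := kw_inv_expand (F := F) w
  have hsq := kw_sq (F := F) w
  have hz : (1 + et F * kw w) * (kw w * kw w⁻¹) = 0 := by
    linear_combination kw w * h0 - hsq
  exact kw_cancel hz

lemma kw_inv_symb (w : Fˣ) : kw (w⁻¹ : Fˣ) = kw w := by
  have h0 := kw_inv_expand (F := F) w
  have hX := kw_mul_inv_self (F := F) w
  have h1 : kw (w⁻¹ : Fˣ) + kw w = 0 := by
    linear_combination h0 - et F * hX
  have h2 := neg_eq_of_add_eq_zero_left h1
  rw [kw_neg] at h2
  exact h2.symm

lemma kw_key1 (u v : Fˣ) (h : (u : F) + (v : F) ≠ 0) :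
    kw u * kw v = (kw u + kw v) * kw (Units.mk0 ((u : F) + (v : F)) h) := by
  set s : Fˣ := Units.mk0 ((u : F) + (v : F)) h with hs
  have hSS : kw s * kw s = 0 := kw_sq s
  have htwo : (2 : KW F) = 0 := kw_two
  have hune : u * s⁻¹ ≠ 1 := by
    intro hh
    have hu_eq : u = s := mul_inv_eq_one.mp hh
    have h5 : (u : F) = (u : F) + (v : F) :=
      calc (u : F) = (s : F) := congrArg Units.val hu_eq
      _ = (u : F) + (v : F) := rfl
    have hv0 : (v : F) = 0 := by linear_combination h5.symm
    exact (Units.ne_zero v) hv0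
  have hst0 : kw (u * s⁻¹) * kw (v * s⁻¹) = 0 := by
    apply kw_steinberg' _ _ _ hune
    rw [Units.val_mul, Units.val_mul, Units.val_inv_eq_inv_val, hs]
    simp only [Units.val_mk0]
    field_simp
  have expu : kw (u * s⁻¹) = kw u + kw s + et F * kw u * kw s := by
    rw [kw_mul, kw_inv_symb]
  have expv : kw (v * s⁻¹) = kw v + kw s + et F * kw v * kw s := by
    rw [kw_mul, kw_inv_symb]
  rw [expu, expv] at hst0
  linear_combination hst0
    - (1 + et F * kw u + et F * kw v + et F * et F * kw u * kw v) * hSS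
    - ((kw u + kw v) * kw s + et F * kw u * kw v * kw s) * htwo

lemma kw_key2 (u v : Fˣ) (h : (u : F) + (v : F) ≠ 0) :
    kw (Units.mk0 ((u : F) + (v : F)) h) * kw (u * v) = kw u * kw v := by
  set s : Fˣ := Units.mk0 ((u : F) + (v : F)) h with hs
  have hSS : kw s * kw s = 0 := kw_sq s
  have key1 := kw_key1 u v h
  rw [kw_mul u v]
  linear_combination (et F * kw s - 1) * key1 + et F * (kw u + kw v) * hSS

/-- The Witt additivity relation holds for the symbols in `K^W`. -/
lemma kw_add_rel (u v : Fˣ) (h : (u : F) + (v : F) ≠ 0) :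
    kw u + kw v
      = kw (Units.mk0 ((u : F) + (v : F)) h)
        + kw (Units.mk0 ((u : F) + (v : F)) h * u * v) := by
  set s : Fˣ := Units.mk0 ((u : F) + (v : F)) h with hs
  have htwo : (2 : KW F) = 0 := kw_two
  have huv : kw (u * v) = kw u + kw v + et F * kw u * kw v := kw_mul u v
  have key2 := kw_key2 u v h
  rw [mul_assoc s u v, kw_mul s (u * v)]
  linear_combination -huv - et F * key2 + (-(kw s) - et F * kw u * kw v) * htwo

lemma kw_square_mul (u v : Fˣ) : kw (u * v ^ 2) = kw u := by
  have hv2 : kw (v ^ 2) = 0 := by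
    rw [sq, kw_mul]
    have htwo : (2 : KW F) = 0 := kw_two
    linear_combination kw v * htwo + et F * kw_sq v
  rw [kw_mul, hv2]
  ring

end KWAddRel
section TTRing

variable {F : Type} [Field F] [CharP F 2]

/-- The auxiliary commutative ring `K^W ⊕ K^W·ε` with `ε² = ηε`. -/
def TT (F : Type) [Field F] [CharP F 2] : Type := KW F × KW F

instance : AddCommGroup (TT F) := inferInstanceAs (AddCommGroup (KW F × KW F))

instance : Mul (TT F) :=
  ⟨fun x y => (x.1 * y.1, x.1 * y.2 + x.2 * y.1 + et F * x.2 * y.2)⟩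

instance : One (TT F) := ⟨((1 : KW F), (0 : KW F))⟩

lemma tt_mul_def (x y : TT F) :
    x * y = (x.1 * y.1, x.1 * y.2 + x.2 * y.1 + et F * x.2 * y.2) := rfl

lemma tt_one_def : (1 : TT F) = ((1 : KW F), (0 : KW F)) := rfl

lemma tt_add_def (x y : TT F) : x + y = (x.1 + y.1, x.2 + y.2) := rfl

lemma tt_zero_def : (0 : TT F) = ((0 : KW F), (0 : KW F)) := rfl

instance : CommRing (TT F) :=
  { (inferInstance : AddCommGroup (TT F)),
    (inferInstance : Mul (TT F)), (inferInstance : One (TT F)) with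
    left_distrib := by
      intro a b c
      erw [tt_mul_def, tt_mul_def, tt_mul_def, tt_add_def, tt_add_def]
      exact Prod.ext (by ring) (by ring)
    right_distrib := by
      intro a b c
      erw [tt_mul_def, tt_mul_def, tt_mul_def, tt_add_def, tt_add_def]
      exact Prod.ext (by ring) (by ring)
    zero_mul := by
      intro a
      erw [tt_mul_def, tt_zero_def]
      exact Prod.ext (by ring) (by ring)
    mul_zero := by
      intro a
      erw [tt_mul_def, tt_zero_def]
      exact Prod.ext (by ring) (by ring)
    mul_assoc := by
      intro a b c
      erw [tt_mul_def, tt_mul_def, tt_mul_def, tt_mul_def]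
      exact Prod.ext (by ring) (by ring)
    one_mul := by
      intro a
      erw [tt_mul_def, tt_one_def]
      exact Prod.ext (by ring) (by ring)
    mul_one := by
      intro a
      erw [tt_mul_def, tt_one_def]
      exact Prod.ext (by ring) (by ring)
    mul_comm := by
      intro a b
      simp only [tt_mul_def]
      exact Prod.ext (by ring) (by ring) }

/-- The map `GW(F) → TT(F)`, `⟨u⟩ ↦ (1, [u])`. -/
def gwToTT (F : Type) [Field F] [CharP F 2] : GW F →+* TT F :=
  RingQuot.lift
    ⟨MvPolynomial.eval₂Hom (Int.castRingHom (TT F)) (fun u => ((1 : KW F), kw u)), by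
      intro x y h
      induction h with
      | sq u v =>
          erw [MvPolynomial.eval₂Hom_X', MvPolynomial.eval₂Hom_X']
          exact Prod.ext (rfl) (kw_square_mul u v)
      | hyp u =>
          simp only [map_add, map_one]
          erw [MvPolynomial.eval₂Hom_X', MvPolynomial.eval₂Hom_X', MvPolynomial.eval₂Hom_X']
          rw [units_neg_eq]
          refine Prod.ext ?_ ?_
          · rfl
          · show kw u + kw u = 0 + kw (-1 : Fˣ)
            rw [units_neg_eq, kw_one, kw_add_self, zero_add]
      | add u v hsum =>
          simp only [map_add]
          erw [MvPolynomial.eval₂Hom_X', MvPolynomial.eval₂Hom_X', MvPolynomial.eval₂Hom_X', MvPolynomial.eval₂Hom_X']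
          refine Prod.ext rfl ?_
          show kw u + kw v = _
          exact kw_add_rel u v hsum
      | mul u v =>
          simp only [map_mul]
          erw [MvPolynomial.eval₂Hom_X', MvPolynomial.eval₂Hom_X', MvPolynomial.eval₂Hom_X']
          refine Prod.ext ?_ ?_
          · show (1 : KW F) * 1 = 1; rw [one_mul]
          · show (1:KW F) * kw v + kw u * 1 + et F * kw u * kw v = kw (u * v)
            rw [kw_mul]; ring
      | one =>
          simp only [map_one]
          erw [MvPolynomial.eval₂Hom_X']
          exact Prod.ext rfl kw_one⟩

lemma gwToTT_gw (u : Fˣ) : gwToTT F (gw u) = ((1 : KW F), kw u) := by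
  rw [gw, gwToTT]
  erw [RingQuot.lift_mkRingHom_apply]
  erw [MvPolynomial.eval₂Hom_X']

lemma gw_one : gw (1 : Fˣ) = (1 : GW F) := by
  have h := RingQuot.mkRingHom_rel (GWRel.one (F := F))
  rw [map_one] at h
  exact h

lemma gw_mul (u v : Fˣ) : gw u * gw v = gw (u * v) := by
  have h := RingQuot.mkRingHom_rel (GWRel.mul (F := F) u v)
  rw [map_mul] at h
  exact h

lemma gwToTT_hGW : gwToTT F (hGW F) = 0 := by
  rw [hGW, map_add, map_one, gwToTT_gw, units_neg_eq]
  refine Prod.ext ?_ ?_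
  · show (1 : KW F) + 1 = 0
    rw [one_add_one_eq_two, kw_two]
  · show (0 : KW F) + kw (1 : Fˣ) = 0
    rw [kw_one, add_zero]

/-- The map `W(F) → TT(F)`. -/
def wToTT (F : Type) [Field F] [CharP F 2] : WittRing F →+* TT F :=
  Ideal.Quotient.lift (Ideal.span {hGW F}) (gwToTT F) (by
    intro a ha
    rw [Ideal.mem_span_singleton] at ha
    obtain ⟨c, rfl⟩ := ha
    rw [map_mul, gwToTT_hGW, zero_mul])

/-- Second coordinate projection, additively. -/
def ttSnd (F : Type) [Field F] [CharP F 2] : TT F →+ KW F :=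
  { toFun := Prod.snd, map_zero' := rfl, map_add' := fun _ _ => rfl }

/-- The additive map `W(F) → K^W(F)`, `⟨u⟩ ↦ [u]`. -/
def lam (F : Type) [Field F] [CharP F 2] : WittRing F →+ KW F :=
  (ttSnd F).comp (wToTT F).toAddMonoidHom

lemma wToTT_w (u : Fˣ) : wToTT F (wq F (gw u)) = ((1 : KW F), kw u) := by
  rw [wq, wToTT]
  erw [Ideal.Quotient.lift_mk]
  rw [gwToTT_gw]

lemma lam_w (u : Fˣ) : lam F (wq F (gw u)) = kw u := by
  rw [lam]
  simp only [AddMonoidHom.coe_comp, Function.comp_apply, RingHom.toAddMonoidHom_eq_coe,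
    AddMonoidHom.coe_coe]
  rw [wToTT_w]
  rfl

lemma lam_one : lam F (1 : WittRing F) = 0 := by
  rw [lam]
  simp only [AddMonoidHom.coe_comp, Function.comp_apply, RingHom.toAddMonoidHom_eq_coe,
    AddMonoidHom.coe_coe, map_one]
  rfl

lemma lam_pfister (a : Fˣ) : lam F (pfister a) = kw a := by
  rw [pfister, units_neg_eq, map_add, lam_one, zero_add]
  rw [lam]
  simp only [AddMonoidHom.coe_comp, Function.comp_apply, RingHom.toAddMonoidHom_eq_coe,
    AddMonoidHom.coe_coe]
  rw [wToTT_w]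
  rfl

lemma w_two : (2 : WittRing F) = 0 := by
  have h1 : wq F (hGW F) = 0 :=
    Ideal.Quotient.eq_zero_iff_mem.mpr (Ideal.mem_span_singleton_self _)
  rw [hGW, units_neg_eq, map_add, map_one, gw_one, map_one, one_add_one_eq_two] at h1
  exact h1

end TTRing
section PhiSection

variable {F : Type} [Field F] [CharP F 2]

lemma w_mul (u v : Fˣ) :
    wq F (gw u) * wq F (gw v) = wq F (gw (u * v)) := by
  rw [← map_mul, gw_mul]

lemma w_add_rel (u v : Fˣ) (h : (u : F) + (v : F) ≠ 0) :
    wq F (gw u) + wq F (gw v)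
      = wq F (gw (Units.mk0 ((u : F) + (v : F)) h))
        + wq F (gw (Units.mk0 ((u : F) + (v : F)) h * u * v)) := by
  have hh := RingQuot.mkRingHom_rel (GWRel.add (F := F) u v h)
  have := congrArg (wq F) hh
  simp only [map_add] at this
  exact this

lemma w_steinberg (a : Fˣ) (h1 : (a : F) ≠ 1) :
    (1 + wq F (gw a)) *
      (1 + wq F (gw (Units.mk0 (1 - (a : F)) (sub_ne_zero_of_ne h1.symm)))) = 0 := by
  set b : Fˣ := Units.mk0 (1 - (a : F)) (sub_ne_zero_of_ne h1.symm) with hb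
  have hbval : (b : F) = 1 - (a : F) := rfl
  have hsum : (a : F) + (b : F) ≠ 0 := by
    rw [hbval]; simp
  have hadd := w_add_rel a b hsum
  have hs1 : Units.mk0 ((a : F) + (b : F)) hsum = 1 := by
    apply Units.ext
    rw [Units.val_one, Units.val_mk0, hbval]; ring
  rw [hs1, gw_one, map_one, one_mul] at hadd
  have hm := w_mul (F := F) a b
  have h2 := w_two (F := F)
  linear_combination hadd + hm + (1 + wq F (gw (a * b))) * h2

/-- The ring map `K^MW(F) → W(F)`, `[u] ↦ ⟨⟨u⟩⟩ = 1 + ⟨u⟩`, `η ↦ 1`. -/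
def phiKMW (F : Type) [Field F] [CharP F 2] : KMW F →+* WittRing F :=
  RingQuot.lift
    ⟨(FreeAlgebra.lift ℤ (fun g : MWGen F => match g with
        | MWGen.of u => 1 + wq F (gw u)
        | MWGen.eta => 1)).toRingHom, by
      intro x y h
      induction h with
      | steinberg a h1 =>
          simp only [AlgHom.toRingHom_eq_coe, RingHom.coe_coe, map_mul, map_zero,
            FreeAlgebra.lift_ι_apply]
          exact w_steinberg a h1
      | mul_rel a b =>
          simp only [AlgHom.toRingHom_eq_coe, RingHom.coe_coe, map_add, map_mul,
            FreeAlgebra.lift_ι_apply]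
          have hm := w_mul (F := F) a b
          have h2 := w_two (F := F)
          linear_combination -hm - (1 + wq F (gw a) + wq F (gw b)) * h2
      | comm_rel u =>
          simp only [AlgHom.toRingHom_eq_coe, RingHom.coe_coe, map_mul,
            FreeAlgebra.lift_ι_apply]
          ring
      | hyp =>
          simp only [AlgHom.toRingHom_eq_coe, RingHom.coe_coe, map_add, map_mul,
            map_zero, map_ofNat, FreeAlgebra.lift_ι_apply]
          rw [units_neg_eq, gw_one, map_one]
          have h2 := w_two (F := F)
          linear_combination 2 * h2⟩

lemma phiKMW_mw (u : Fˣ) : phiKMW F (mw u) = 1 + wq F (gw u) := by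
  rw [mw, phiKMW]
  erw [RingQuot.lift_mkRingHom_apply]
  simp [FreeAlgebra.lift_ι_apply]

lemma phiKMW_eta : phiKMW F (mweta F) = 1 := by
  rw [mweta, phiKMW]
  erw [RingQuot.lift_mkRingHom_apply]
  simp [FreeAlgebra.lift_ι_apply]

lemma phiKMW_h : phiKMW F (hKMW F) = 0 := by
  rw [hKMW, map_add, map_mul, map_ofNat, phiKMW_eta, phiKMW_mw, units_neg_eq, gw_one, map_one]
  have h2 := w_two (F := F)
  linear_combination 2 * h2

/-- The ring map `K^W(F) → W(F)`. -/
def phiKW (F : Type) [Field F] [CharP F 2] : KW F →+* WittRing F :=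
  RingQuot.lift
    ⟨phiKMW F, by
      rintro x y ⟨rfl, rfl⟩
      rw [phiKMW_h, map_zero]⟩

lemma phiKW_kw (u : Fˣ) : phiKW F (kw u) = 1 + wq F (gw u) := by
  rw [kw, kwq, phiKW]
  erw [RingQuot.lift_mkRingHom_apply]
  exact phiKMW_mw u

lemma phiKW_et : phiKW F (et F) = 1 := by
  rw [et, kwq, phiKW]
  erw [RingQuot.lift_mkRingHom_apply]
  exact phiKMW_eta

/-- The additive section `ZMod 2 →+ W(F)`. -/
def jmap (F : Type) [Field F] [CharP F 2] : ZMod 2 →+ WittRing F :=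
  ZMod.lift 2 ⟨Int.castAddHom (WittRing F), by
    simp only [Int.coe_castAddHom]
    push_cast
    exact w_two⟩

lemma jmap_one : jmap F (1 : ZMod 2) = 1 := by
  have : ((1 : ℤ) : ZMod 2) = 1 := by norm_cast
  rw [← this, jmap, ZMod.lift_coe]
  simp

lemma rkW_w (u : Fˣ) : rkW F (wq F (gw u)) = 1 := by
  rw [wq, rkW]
  erw [Ideal.Quotient.lift_mk]
  erw [rkGW, gw, RingQuot.lift_mkRingHom_apply]
  simp

/-- Additive generation of the Witt ring by the `⟨u⟩`. -/
lemma w_gen_top :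
    AddSubgroup.closure (Set.range fun u : Fˣ => wq F (gw u)) = ⊤ := by
  rw [eq_top_iff]
  intro x _
  set S : Set (WittRing F) := Set.range fun u : Fˣ => wq F (gw u) with hS
  have hone : (1 : WittRing F) ∈ AddSubgroup.closure S := by
    apply AddSubgroup.subset_closure
    exact ⟨1, by show wq F (gw 1) = 1; rw [gw_one, map_one]⟩
  have hmul : ∀ t ∈ AddSubgroup.closure S, ∀ u : Fˣ,
      t * wq F (gw u) ∈ AddSubgroup.closure S := by
    intro t ht u
    induction ht using AddSubgroup.closure_induction with
    | mem y hy =>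
        obtain ⟨v, rfl⟩ := hy
        apply AddSubgroup.subset_closure
        refine ⟨v * u, ?_⟩
        show wq F (gw (v * u)) = wq F (gw v) * wq F (gw u)
        rw [w_mul]
    | zero => rw [zero_mul]; exact AddSubgroup.zero_mem _
    | add a b _ _ ha hb => rw [add_mul]; exact AddSubgroup.add_mem _ ha hb
    | neg a _ ha => rw [neg_mul]; exact AddSubgroup.neg_mem _ ha
  have wq_surj : Function.Surjective (wq F) := fun t => Ideal.Quotient.mk_surjective t
  suffices hsuf : ∀ z : MvPolynomial Fˣ ℤ,
      wq F (RingQuot.mkRingHom (GWRel F) z) ∈ AddSubgroup.closure S by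
    obtain ⟨y, rfl⟩ := wq_surj x
    obtain ⟨z, rfl⟩ := RingQuot.mkRingHom_surjective (GWRel F) y
    exact hsuf z
  intro z
  induction z using MvPolynomial.induction_on with
  | C a =>
      have hc : wq F ((RingQuot.mkRingHom (GWRel F)) (MvPolynomial.C a))
          = (a : WittRing F) := by
        have h1 : (MvPolynomial.C a : MvPolynomial Fˣ ℤ) = (a : MvPolynomial Fˣ ℤ) := by
          rw [← map_intCast (MvPolynomial.C (σ := Fˣ) (R := ℤ)) a, Int.cast_id]
        rw [h1, map_intCast]
        erw [map_intCast]
      rw [hc, ← zsmul_one a]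
      exact AddSubgroup.zsmul_mem _ hone a
  | add p q hp hq =>
      erw [map_add, map_add]
      exact AddSubgroup.add_mem _ hp hq
  | mul_X p u hp =>
      erw [map_mul, map_mul]
      exact hmul _ hp u

/-- The key identity: `Φ ∘ λ = id + j ∘ rk`. -/
lemma phi_lam (x : WittRing F) :
    phiKW F (lam F x) = x + jmap F (rkW F x) := by
  have := w_gen_top (F := F)
  have hx : x ∈ AddSubgroup.closure (Set.range fun u : Fˣ => wq F (gw u)) := by
    rw [this]; trivial
  induction hx using AddSubgroup.closure_induction with
  | mem y hy =>
      obtain ⟨u, rfl⟩ := hy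
      rw [lam_w, phiKW_kw, rkW_w, jmap_one, add_comm]
  | zero => simp
  | add a b _ _ ha hb =>
      rw [map_add, map_add, map_add, map_add, ha, hb]
      abel
  | neg a _ ha =>
      rw [map_neg, map_neg, map_neg, map_neg, ha]
      abel

lemma phi_lam_of_I {x : WittRing F} (hx : x ∈ fundIdeal F) :
    phiKW F (lam F x) = x := by
  rw [phi_lam, RingHom.mem_ker.mp hx, map_zero, add_zero]

end PhiSection
section Final

variable {F : Type} [Field F] [CharP F 2]

omit [CharP F 2] in
lemma kw_mem_comp1 (u : Fˣ) : kw u ∈ KWcomp F 1 := by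
  rw [KWcomp]
  refine AddSubgroup.mem_map.mpr ⟨mw u, ?_, rfl⟩
  apply AddSubgroup.subset_closure
  refine ⟨0, 1, fun _ => u, by norm_num, ?_⟩
  simp [List.ofFn_succ]

lemma lam_mem_comp1 (w : WittRing F) : lam F w ∈ KWcomp F 1 := by
  have htop := w_gen_top (F := F)
  have hx : w ∈ AddSubgroup.closure (Set.range fun u : Fˣ => wq F (gw u)) := by
    rw [htop]; trivial
  induction hx using AddSubgroup.closure_induction with
  | mem y hy =>
      obtain ⟨u, rfl⟩ := hy
      rw [lam_w]
      exact kw_mem_comp1 u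
  | zero => rw [map_zero]; exact AddSubgroup.zero_mem _
  | add a b _ _ ha hb => rw [map_add]; exact AddSubgroup.add_mem _ ha hb
  | neg a _ ha => rw [map_neg]; exact AddSubgroup.neg_mem _ ha

lemma pfister_mem_I (a : Fˣ) : pfister a ∈ fundIdeal F := by
  rw [fundIdeal, RingHom.mem_ker, pfister, map_add, map_one, units_neg_eq, rkW_w]
  decide

/-- Pair constructor for `TT`, forcing the type. -/
def ttMk (a b : KW F) : TT F := (a, b)

lemma wToTT_pfister (a : Fˣ) : wToTT F (pfister a) = ttMk 0 (kw a) := by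
  rw [pfister, units_neg_eq, map_add, map_one, wToTT_w]
  refine Prod.ext ?_ ?_
  · show (1 : KW F) + 1 = 0
    rw [one_add_one_eq_two, kw_two]
  · show (0 : KW F) + kw a = kw a
    rw [zero_add]

lemma tt_prod_ofFn (m : ℕ) (g : Fin (m + 1) → KW F) :
    (List.ofFn fun i => ttMk 0 (g i)).prod
      = ttMk 0 ((et F) ^ m * (List.ofFn fun i => g i).prod) := by
  induction m with
  | zero =>
      simp only [List.ofFn_succ, List.ofFn_zero, List.prod_cons, List.prod_nil, mul_one]
      refine Prod.ext rfl ?_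
      show g 0 = et F ^ 0 * g 0
      rw [pow_zero, one_mul]
  | succ n ih =>
      rw [List.ofFn_succ, List.prod_cons, ih (fun i => g i.succ)]
      rw [List.ofFn_succ (f := fun i => g i), List.prod_cons]
      refine Prod.ext ?_ ?_
      · show (0 : KW F) * 0 = 0; rw [mul_zero]
      · show (0:KW F) * (et F ^ n * (List.ofFn fun i => g i.succ).prod)
            + g 0 * 0 + et F * g 0 * (et F ^ n * (List.ofFn fun i => g i.succ).prod)
            = et F ^ (n + 1) * (g 0 * (List.ofFn fun i => g i.succ).prod)
        ring

lemma prod_pfister_mem_I (m : ℕ) (v : Fin (m + 1) → Fˣ) :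
    (List.ofFn fun i => pfister (v i)).prod ∈ fundIdeal F := by
  rw [List.ofFn_succ, List.prod_cons]
  exact Ideal.mul_mem_right _ _ (pfister_mem_I (v 0))

lemma lam_prod_pfister (m : ℕ) (v : Fin (m + 1) → Fˣ) :
    lam F ((List.ofFn fun i => pfister (v i)).prod)
      = (et F) ^ m * (List.ofFn fun i => kw (v i)).prod := by
  have h1 : wToTT F ((List.ofFn fun i => pfister (v i)).prod)
      = ttMk 0 ((et F) ^ m * (List.ofFn fun i => kw (v i)).prod) := by
    rw [map_list_prod, List.map_ofFn]
    have h2 : ((wToTT F) ∘ fun i => pfister (v i))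
        = fun i => ttMk 0 (kw (v i)) := by
      funext i
      simp only [Function.comp_apply]
      exact wToTT_pfister (v i)
    rw [h2]
    exact tt_prod_ofFn m (fun i => kw (v i))
  show ttSnd F (wToTT F _) = _
  rw [h1]
  rfl

lemma kwq_monomial (m : ℕ) (r : ℕ) (v : Fin r → Fˣ) :
    kwq F ((mweta F) ^ m * (List.ofFn fun i => mw (v i)).prod)
      = (et F) ^ m * (List.ofFn fun i => kw (v i)).prod := by
  rw [map_mul, map_pow, map_list_prod, List.map_ofFn]
  rfl

/-- The isomorphism `I(F) ≅ K^W_1(F)` in characteristic 2. -/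
theorem stmt19' (F : Type) [Field F] [CharP F 2] :
    ∃ f : fundIdeal F →+ KW F,
      (∀ (a : Fˣ) (ha : pfister a ∈ fundIdeal F), f ⟨pfister a, ha⟩ = kw a) ∧
      Function.Injective f ∧
      (∀ x : fundIdeal F, f x ∈ KWcomp F 1) ∧
      (∀ y ∈ KWcomp F 1, ∃ x : fundIdeal F, f x = y) := by
  refine ⟨(lam F).comp ((fundIdeal F).subtype.toAddMonoidHom), ?_, ?_, ?_, ?_⟩
  · intro a ha
    exact lam_pfister a
  · intro x y h
    simp only [AddMonoidHom.coe_comp, Function.comp_apply, LinearMap.toAddMonoidHom_coe,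
      Submodule.coe_subtype] at h
    have hx := phi_lam_of_I (F := F) x.2
    have hy := phi_lam_of_I (F := F) y.2
    apply Subtype.ext
    rw [← hx, ← hy, h]
  · intro x
    exact lam_mem_comp1 _
  · intro y hy
    rw [KWcomp] at hy
    obtain ⟨z, hz, rfl⟩ := AddSubgroup.mem_map.mp hy
    clear hy
    induction hz using AddSubgroup.closure_induction with
    | mem w hw =>
        obtain ⟨m, r, v, hmr, rfl⟩ := hw
        have hr : r = m + 1 := by omega
        subst hr
        refine ⟨⟨(List.ofFn fun i => pfister (v i)).prod, prod_pfister_mem_I m v⟩, ?_⟩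
        simp only [AddMonoidHom.coe_comp, Function.comp_apply, LinearMap.toAddMonoidHom_coe,
          Submodule.coe_subtype, RingHom.toAddMonoidHom_eq_coe, AddMonoidHom.coe_coe]
        rw [lam_prod_pfister, kwq_monomial]
    | zero =>
        exact ⟨0, by simp⟩
    | add a b _ _ ha hb =>
        obtain ⟨x, hx⟩ := ha
        obtain ⟨x', hx'⟩ := hb
        exact ⟨x + x', by rw [map_add, map_add, hx, hx']⟩
    | neg a _ ha =>
        obtain ⟨x, hx⟩ := ha
        exact ⟨-x, by rw [map_neg, map_neg, hx]⟩

end Final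

theorem stmt19 (F : Type) [Field F] [CharP F 2] :
    ∃ f : fundIdeal F →+ KW F,
      (∀ (a : Fˣ) (ha : pfister a ∈ fundIdeal F), f ⟨pfister a, ha⟩ = kw a) ∧
      Function.Injective f ∧
      (∀ x : fundIdeal F, f x ∈ KWcomp F 1) ∧
      (∀ y ∈ KWcomp F 1, ∃ x : fundIdeal F, f x = y) := by
  exact stmt19' F
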